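/- arXiv:1711.09830 — 6 statements merged into one kernel-verified Lean document; each statement's English description precedes it below -/
import Mathlib

section
/- Let S be a standard Borel space. Then the total variation map μ ↦ |μ|, from the space M±(S) of finite signed measures on S to the space M(S) of finite (nonnegative) measures on S, is measurable, where both spaces carry the σ-algebra generated by the evaluation maps μ ↦ μ(B) over measurable sets B ⊆ S. -/
open MeasureTheory

/-- The σ-algebra on the space `M±(S)` of finite signed measures on `S`,
generated by the evaluation maps `μ ↦ μ B` over measurable sets `B`. -/
instance signedMeasureMeasurableSpace (S : Type*) [MeasurableSpace S] :
    MeasurableSpace (SignedMeasure S) :=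
  ⨆ (B : Set S) (_ : MeasurableSet B),
    MeasurableSpace.comap (fun μ : SignedMeasure S => μ B) inferInstance

instance totalVariation_isFiniteMeasure (S : Type*) [MeasurableSpace S]
    (μ : SignedMeasure S) : IsFiniteMeasure μ.totalVariation := by
  rw [SignedMeasure.totalVariation]; infer_instance

/-! Writing `|μ| = μ⁺ + μ⁻` with `μ⁻ = (-μ)⁺`, it suffices to show that `μ ↦ μ⁺ B` is measurable.
If `P` is a Hahn positive set of `μ`, then `μ⁺ B = μ (P ∩ B)` dominates every `μ (A ∩ B)`, and
`|μ (P ∩ B) - μ (A ∩ B)| ≤ |μ| (P ∆ A)`. On a countably generated space, a countable algebra `𝒜`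
generating the σ-algebra approximates `P` in `|μ|`-measure whatever `μ` is, so
`μ⁺ B = ⨆ A ∈ 𝒜, (μ (A ∩ B))⁺` is a countable supremum of measurable functions of `μ`.
-/

open Set
open scoped ENNReal symmDiff

theorem MeasurableSpace.exists_countable_forall_measureDense {S : Type*} [MeasurableSpace S]
    [MeasurableSpace.CountablyGenerated S] :
    ∃ 𝒜 : Set (Set S), 𝒜.Countable ∧
      ∀ (μ : Measure S) [IsFiniteMeasure μ], μ.MeasureDense 𝒜 := by
  obtain ⟨𝒞, h𝒞, hgen⟩ := MeasurableSpace.CountablyGenerated.isCountablyGenerated (α := S)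
  refine ⟨generateSetAlgebra 𝒞, countable_generateSetAlgebra h𝒞, fun μ _ => ?_⟩
  refine .of_generateFrom_isSetAlgebra_finite μ isSetAlgebra_generateSetAlgebra ?_
  rw [hgen, generateFrom_generateSetAlgebra_eq]

namespace MeasureTheory.SignedMeasure

variable {S : Type*} [MeasurableSpace S]

theorem measurable_apply {B : Set S} (hB : MeasurableSet B) :
    Measurable fun μ : SignedMeasure S => μ B :=
  measurable_iff_comap_le.2 <| le_iSup₂ (f := fun B (_ : MeasurableSet B) =>
    MeasurableSpace.comap (fun μ : SignedMeasure S => μ B) inferInstance) B hB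

theorem apply_le_posPart_real (μ : SignedMeasure S) {B : Set S} (hB : MeasurableSet B) :
    μ B ≤ μ.toJordanDecomposition.posPart.real B := by
  rw [μ.apply_eq_posPart_real_sub_negPart_real hB]
  linarith [measureReal_nonneg (μ := μ.toJordanDecomposition.negPart) (s := B)]

theorem apply_le_apply_add_totalVariation_real_symmDiff (μ : SignedMeasure S) {s t : Set S}
    (hs : MeasurableSet s) (ht : MeasurableSet t) :
    μ s ≤ μ t + μ.totalVariation.real (s ∆ t) := by
  have hdiff : ∀ {u v : Set S}, MeasurableSet u → MeasurableSet v → μ (u \ v) = μ u - μ (u ∩ v) :=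
    fun hu hv => by
      rw [← sdiff_self_inter, VectorMeasure.of_sdiff (hu.inter hv) hu inter_subset_left]
  have hsymm : μ.totalVariation.real (s ∆ t) =
      μ.totalVariation.real (s \ t) + μ.totalVariation.real (t \ s) :=
    measureReal_union disjoint_sdiff_sdiff (ht.diff hs)
  have hst := μ.norm_le_totalVariation (s \ t)
  have hts := μ.norm_le_totalVariation (t \ s)
  rw [Real.norm_eq_abs, abs_le] at hst hts
  rw [hdiff hs ht] at hst
  rw [hdiff ht hs, inter_comm] at hts
  linarith

theorem posPart_apply_eq_biSup (μ : SignedMeasure S) {𝒜 : Set (Set S)}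
    (h𝒜 : μ.totalVariation.MeasureDense 𝒜) {B : Set S} (hB : MeasurableSet B) :
    μ.toJordanDecomposition.posPart B = ⨆ A ∈ 𝒜, ENNReal.ofReal (μ (A ∩ B)) := by
  refine le_antisymm ?_ (iSup₂_le fun A hA => ?_)
  · obtain ⟨P, hP, hP_pos, -, hpos, -⟩ := μ.toJordanDecomposition_spec
    have hposB : μ.toJordanDecomposition.posPart B = ENNReal.ofReal (μ (P ∩ B)) := by
      rw [hpos, toMeasureOfZeroLE_apply _ hP_pos hP hB, ENNReal.ofReal_eq_coe_nnreal]
    rw [hposB]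
    refine ENNReal.le_of_forall_pos_le_add fun ε hε _ => ?_
    obtain ⟨A, hA, hPA⟩ := h𝒜.approx P hP (measure_ne_top _ _) ε hε
    have hclose : μ (P ∩ B) ≤ μ (A ∩ B) + ε := calc
      μ (P ∩ B) ≤ μ (A ∩ B) + μ.totalVariation.real ((P ∩ B) ∆ (A ∩ B)) :=
        μ.apply_le_apply_add_totalVariation_real_symmDiff (hP.inter hB)
          ((h𝒜.measurable A hA).inter hB)
      _ ≤ μ (A ∩ B) + μ.totalVariation.real (P ∆ A) := by
        rw [← inter_symmDiff_distrib_right]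
        gcongr
        exacts [measure_ne_top _ _, inter_subset_left]
      _ ≤ μ (A ∩ B) + ε := by
        gcongr
        exact ENNReal.toReal_le_of_le_ofReal ε.coe_nonneg hPA.le
    calc ENNReal.ofReal (μ (P ∩ B)) ≤ ENNReal.ofReal (μ (A ∩ B)) + ε := by
          simpa using (ENNReal.ofReal_le_ofReal hclose).trans ENNReal.ofReal_add_le
      _ ≤ (⨆ A ∈ 𝒜, ENNReal.ofReal (μ (A ∩ B))) + ε := by
          gcongr
          exact le_iSup₂ (f := fun A (_ : A ∈ 𝒜) => ENNReal.ofReal (μ (A ∩ B))) A hA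
  · calc ENNReal.ofReal (μ (A ∩ B))
        ≤ ENNReal.ofReal (μ.toJordanDecomposition.posPart.real (A ∩ B)) :=
          ENNReal.ofReal_le_ofReal (μ.apply_le_posPart_real ((h𝒜.measurable A hA).inter hB))
      _ = μ.toJordanDecomposition.posPart (A ∩ B) := ofReal_measureReal (measure_ne_top _ _)
      _ ≤ μ.toJordanDecomposition.posPart B := measure_mono inter_subset_right

theorem totalVariation_apply_eq_biSup (μ : SignedMeasure S) {𝒜 : Set (Set S)}
    (h𝒜 : μ.totalVariation.MeasureDense 𝒜) {B : Set S} (hB : MeasurableSet B) :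
    μ.totalVariation B = (⨆ A ∈ 𝒜, ENNReal.ofReal (μ (A ∩ B)))
      + ⨆ A ∈ 𝒜, ENNReal.ofReal (-μ (A ∩ B)) := by
  have h𝒜' : (-μ).totalVariation.MeasureDense 𝒜 := by rwa [totalVariation_neg]
  rw [totalVariation, Measure.add_apply, posPart_apply_eq_biSup μ h𝒜 hB,
    ← JordanDecomposition.neg_posPart, ← toJordanDecomposition_neg,
    posPart_apply_eq_biSup (-μ) h𝒜' hB]
  rfl

theorem measurable_totalVariation_apply [MeasurableSpace.CountablyGenerated S] {B : Set S}
    (hB : MeasurableSet B) : Measurable fun μ : SignedMeasure S => μ.totalVariation B := by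
  obtain ⟨𝒜, h𝒜, hdense⟩ := MeasurableSpace.exists_countable_forall_measureDense (S := S)
  simp_rw [fun μ : SignedMeasure S => totalVariation_apply_eq_biSup μ (hdense _) hB]
  have hmeas : ∀ A ∈ 𝒜, Measurable fun μ : SignedMeasure S => μ (A ∩ B) := fun A hA =>
    measurable_apply (((hdense 0).measurable A hA).inter hB)
  exact .add (.biSup _ h𝒜 fun A hA => (hmeas A hA).ennreal_ofReal)
    (.biSup _ h𝒜 fun A hA => (hmeas A hA).neg.ennreal_ofReal)

end MeasureTheory.SignedMeasure

/-- for a standard Borel space `S`, the total variation map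
`μ ↦ |μ|` from `M±(S)` to `M(S)` is measurable, where `M(S)` (the finite
nonnegative measures) carries the σ-algebra induced by the evaluation maps. -/
theorem totalVariation_measurable (S : Type*) [MeasurableSpace S] [StandardBorelSpace S] :
    Measurable (fun μ : SignedMeasure S =>
      (⟨μ.totalVariation, inferInstance⟩ : {ν : Measure S // IsFiniteMeasure ν})) :=
  (Measure.measurable_of_measurable_coe _ fun _ hB =>
    SignedMeasure.measurable_totalVariation_apply hB).subtype_mk
end

section
/- Let S and T be measurable spaces. A map s ↦ μ_s from S to M(M(T)) (finite measures on the space of finite measures on T) is measurable — i.e., is a kernel from S to M(T) — if and only if, for every bounded measurable function h : T → [0,∞), the map s ↦ ∫_{M(T)} exp(−ν(h)) dμ_s(ν) is measurable from S to [0,∞]. -/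
/-!
Call a bounded measurable `F : M(T) → ℝ` good if `s ↦ ∫ F dμ_s` is measurable. Good functions
form a vector space which, by dominated convergence, is closed under uniformly bounded pointwise
limits. The functions `ν ↦ exp (-ν(h))` are good by hypothesis and closed under products
(`exp (-ν h) exp (-ν g) = exp (-ν (h + g))`), so the whole algebra they generate is good. For `f`
in that algebra, Weierstrass polynomials `qₙ` with `qₙ ∘ f → 1_{f ≥ a}` boundedly show that the
indicator of every finite intersection of superlevel sets `{f ≥ a}` is good. These sets form a
π-system, and they generate the σ-algebra of `M(T)` because `ν(B) = -log (exp (-ν(1_B)))`;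
Dynkin's π-λ theorem then makes `s ↦ μ_s(E)` measurable for every measurable `E`.
-/

open MeasureTheory Set Filter Topology Polynomial

theorem exists_polynomial_tendsto_indicator_Ici (a b c : ℝ) :
    ∃ q : ℕ → ℝ[X], (∀ n, ∀ u ∈ Icc a b, |(q n).eval u| ≤ 2) ∧
      ∀ u ∈ Icc a b, Tendsto (fun n => (q n).eval u) atTop (𝓝 ((Ici c).indicator 1 u)) := by
  let g (n : ℕ) (u : ℝ) : ℝ := (isClosed_Ici (a := c)).apprSeq n u
  have hg_le (n : ℕ) (u : ℝ) : |g n u| ≤ 1 := by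
    simpa [g] using HasOuterApproxClosed.apprSeq_apply_le_one isClosed_Ici n u
  have hg_lim (u : ℝ) : Tendsto (g · u) atTop (𝓝 ((Ici c).indicator 1 u)) := by
    have h := (NNReal.continuous_coe.tendsto _).comp
      (tendsto_pi_nhds.1 (HasOuterApproxClosed.tendsto_apprSeq (isClosed_Ici (a := c))) u)
    rwa [NNReal.coe_indicator, NNReal.coe_one] at h
  choose q hq using fun n : ℕ => exists_polynomial_near_of_continuousOn a b (g n)
    (NNReal.continuous_coe.comp ((isClosed_Ici (a := c)).apprSeq n).continuous).continuousOn
    (1 / (n + 1)) (by positivity)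
  refine ⟨q, fun n u hu => ?_, fun u hu => ?_⟩
  · have hq_near : |(q n).eval u - g n u| ≤ 1 :=
      (hq n u hu).le.trans (div_le_one_of_le₀ (by simp) (by positivity))
    linarith [abs_sub_abs_le_abs_sub ((q n).eval u) (g n u), hg_le n u]
  · have hdiff : Tendsto (fun n => (q n).eval u - g n u) atTop (𝓝 0) :=
      squeeze_zero_norm (fun n => (hq n u hu).le) tendsto_one_div_add_atTop_nhds_zero_nat
    simpa using hdiff.add (hg_lim u)

theorem exists_tendsto_indicator_superlevelInter {β : Type*} {A : Subalgebra ℝ (β → ℝ)}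
    (hA : ∀ f ∈ A, ∃ C, ∀ x, |f x| ≤ C) {t : Finset ((β → ℝ) × ℝ)}
    (ht : ∀ p ∈ t, p.1 ∈ A) :
    ∃ F : ℕ → β → ℝ, (∀ n, F n ∈ A) ∧ (∃ C, ∀ n x, |F n x| ≤ C) ∧
      ∀ x, Tendsto (F · x) atTop (𝓝 ({x | ∀ p ∈ t, p.2 ≤ p.1 x}.indicator 1 x)) := by
  choose! C hC using fun p (hp : p ∈ t) => hA p.1 (ht p hp)
  choose q hq_bdd hq_lim using fun p : (β → ℝ) × ℝ =>
    exists_polynomial_tendsto_indicator_Ici (-C p) (C p) p.2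
  have hrange : ∀ p ∈ t, ∀ x, p.1 x ∈ Icc (-C p) (C p) := fun p hp x => abs_le.1 (hC p hp x)
  refine ⟨fun n x => ∏ p ∈ t, (q p n).eval (p.1 x), fun n => ?_,
    ⟨2 ^ t.card, fun n x => ?_⟩, fun x => ?_⟩
  · have hF : (fun x => ∏ p ∈ t, (q p n).eval (p.1 x)) = ∏ p ∈ t, aeval p.1 (q p n) := by
      ext x
      simp [aeval_fn_apply]
    dsimp only
    rw [hF]
    exact Subalgebra.prod_mem _ fun p hp =>
      Algebra.adjoin_singleton_le (ht p hp) (aeval_mem_adjoin_singleton ℝ p.1)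
  · rw [Finset.abs_prod]
    calc ∏ p ∈ t, |(q p n).eval (p.1 x)| ≤ ∏ _p ∈ t, (2 : ℝ) :=
          Finset.prod_le_prod (fun _ _ => abs_nonneg _) fun p hp => hq_bdd p n _ (hrange p hp x)
      _ = 2 ^ t.card := Finset.prod_const 2
  · have h := tendsto_finsetProd t fun p hp => hq_lim p (p.1 x) (hrange p hp x)
    simp only [indicator_apply, mem_Ici, Pi.one_apply, Finset.prod_boole] at h
    simpa only [indicator_apply, mem_ofPred_eq, Pi.one_apply] using h

theorem measurable_of_mem_iSup_comap {α γ : Type*} [MeasurableSpace γ] {A : Set (α → γ)}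
    {f : α → γ} (hf : f ∈ A) :
    Measurable[⨆ g ∈ A, MeasurableSpace.comap g inferInstance] f :=
  (comap_measurable f).mono
    (le_iSup₂ (f := fun g (_ : g ∈ A) => MeasurableSpace.comap g inferInstance) f hf) le_rfl

section SuperlevelSets

variable {β : Type*}

def superlevelInterSets (A : Set (β → ℝ)) : Set (Set β) :=
  {E | ∃ s : Finset ((β → ℝ) × ℝ), (∀ p ∈ s, p.1 ∈ A) ∧ E = {x | ∀ p ∈ s, p.2 ≤ p.1 x}}

theorem isPiSystem_superlevelInterSets (A : Set (β → ℝ)) :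
    IsPiSystem (superlevelInterSets A) := by
  classical
  rintro _ ⟨s, hs, rfl⟩ _ ⟨t, ht, rfl⟩ -
  refine ⟨s ∪ t, fun p hp => (Finset.mem_union.1 hp).elim (hs p) (ht p), ?_⟩
  ext x
  simp only [mem_inter_iff, mem_ofPred_eq, Finset.mem_union, or_imp, forall_and]

theorem measurableSet_of_mem_superlevelInterSets [MeasurableSpace β] {A : Set (β → ℝ)}
    (hA : ∀ f ∈ A, Measurable f) {E : Set β} (hE : E ∈ superlevelInterSets A) :
    MeasurableSet E := by
  obtain ⟨s, hs, rfl⟩ := hE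
  have hE : {x | ∀ p ∈ s, p.2 ≤ p.1 x} = ⋂ p ∈ s, p.1 ⁻¹' Ici p.2 := by ext; simp
  rw [hE]
  exact Finset.measurableSet_biInter s fun p hp => hA p.1 (hs p hp) measurableSet_Ici

theorem iSup_comap_eq_generateFrom_superlevelInterSets (A : Set (β → ℝ)) :
    ⨆ f ∈ A, MeasurableSpace.comap f inferInstance =
      MeasurableSpace.generateFrom (superlevelInterSets A) := by
  apply le_antisymm
  · refine iSup₂_le fun f hf => measurable_iff_comap_le.1 <|
      measurable_of_Ici (mδ := MeasurableSpace.generateFrom _) fun a =>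
        MeasurableSpace.measurableSet_generateFrom ⟨{(f, a)}, by simpa using hf, by ext; simp⟩
  · exact MeasurableSpace.generateFrom_le fun E hE =>
      @measurableSet_of_mem_superlevelInterSets _ (⨆ f ∈ A, .comap f inferInstance) _
        (fun _ hf => measurable_of_mem_iSup_comap hf) E hE

end SuperlevelSets

section MeasurableIntegrals

variable {S β : Type*} [MeasurableSpace S] [MeasurableSpace β]
  (μ : S → Measure β) [∀ s, IsFiniteMeasure (μ s)]

def measurableIntegralSubmodule : Submodule ℝ (β → ℝ) where
  carrier := {f | Measurable f ∧ (∃ C, ∀ x, |f x| ≤ C) ∧ Measurable fun s => ∫ x, f x ∂μ s}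
  zero_mem' := ⟨measurable_const, ⟨0, by simp⟩, by simp⟩
  add_mem' := by
    rintro f g ⟨hf, ⟨C, hC⟩, hfμ⟩ ⟨hg, ⟨D, hD⟩, hgμ⟩
    refine ⟨hf.add hg,
      ⟨C + D, fun x => (abs_add_le _ _).trans (add_le_add (hC x) (hD x))⟩, ?_⟩
    simp only [Pi.add_apply,
      integral_add (.of_bound hf.aestronglyMeasurable C (ae_of_all _ hC))
        (.of_bound hg.aestronglyMeasurable D (ae_of_all _ hD))]
    exact hfμ.add hgμ
  smul_mem' := by
    rintro r f ⟨hf, ⟨C, hC⟩, hfμ⟩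
    refine ⟨hf.const_smul r, ⟨|r| * C, fun x => ?_⟩, ?_⟩
    · simpa [abs_mul] using mul_le_mul_of_nonneg_left (hC x) (abs_nonneg r)
    · simp only [Pi.smul_apply, integral_smul]
      exact hfμ.const_smul r

variable {μ} {A : Subalgebra ℝ (β → ℝ)}

theorem measurable_integral_of_tendsto {F : ℕ → β → ℝ} {f : β → ℝ} {C : ℝ}
    (hF : ∀ n, F n ∈ measurableIntegralSubmodule μ) (hC : ∀ n x, |F n x| ≤ C)
    (hlim : ∀ x, Tendsto (F · x) atTop (𝓝 (f x))) :
    Measurable fun s => ∫ x, f x ∂μ s :=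
  measurable_of_tendsto_metrizable (fun n => (hF n).2.2) <| tendsto_pi_nhds.2 fun _ =>
    tendsto_integral_of_dominated_convergence (fun _ => C)
      (fun n => (hF n).1.aestronglyMeasurable) (integrable_const C)
      (fun n => ae_of_all _ (hC n)) (ae_of_all _ hlim)

theorem measurable_measure_of_mem_superlevelInterSets
    (hA : Subalgebra.toSubmodule A ≤ measurableIntegralSubmodule μ) {E : Set β}
    (hE : E ∈ superlevelInterSets (A : Set (β → ℝ))) : Measurable fun s => μ s E := by
  obtain ⟨t, htA, rfl⟩ := hE
  obtain ⟨F, hFA, ⟨C, hC⟩, hlim⟩ :=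
    exists_tendsto_indicator_superlevelInter (fun f hf => (hA hf).2.1) htA
  have hE : MeasurableSet {x | ∀ p ∈ t, p.2 ≤ p.1 x} :=
    measurableSet_of_mem_superlevelInterSets (fun f hf => (hA hf).1) ⟨t, htA, rfl⟩
  have h := measurable_integral_of_tendsto (fun n => hA (hFA n)) hC hlim
  simp only [integral_indicator_one hE] at h
  simpa [ofReal_measureReal] using h.ennreal_ofReal

theorem Measurable.measure_of_subalgebra
    (hA : Subalgebra.toSubmodule A ≤ measurableIntegralSubmodule μ)
    (hgen : ‹MeasurableSpace β› ≤ ⨆ f ∈ A, MeasurableSpace.comap f inferInstance) :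
    Measurable μ := by
  have hgen' : ‹MeasurableSpace β› = .generateFrom (superlevelInterSets (A : Set (β → ℝ))) := by
    rw [← iSup_comap_eq_generateFrom_superlevelInterSets]
    exact le_antisymm hgen (iSup₂_le fun f hf => measurable_iff_comap_le.1 (hA hf).1)
  refine .measure_of_isPiSystem hgen' (isPiSystem_superlevelInterSets _)
    (fun E hE => measurable_measure_of_mem_superlevelInterSets hA hE) ?_
  exact measurable_measure_of_mem_superlevelInterSets hA ⟨∅, by simp, by simp⟩

end MeasurableIntegrals

section LaplaceFunctionals

variable {T : Type*} [MeasurableSpace T]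

def laplaceFunctionals (T : Type*) [MeasurableSpace T] :
    Submonoid ({ν : Measure T // IsFiniteMeasure ν} → ℝ) where
  carrier := {F | ∃ h : T → NNReal, Measurable h ∧ (∃ C, ∀ t, h t ≤ C) ∧
    F = fun ν => Real.exp (-(∫⁻ t, (h t : ENNReal) ∂ν.1).toReal)}
  one_mem' := ⟨0, measurable_const, ⟨0, fun _ => le_rfl⟩, by ext; simp⟩
  mul_mem' := by
    rintro _ _ ⟨h, hh, ⟨C, hC⟩, rfl⟩ ⟨g, hg, ⟨D, hD⟩, rfl⟩
    refine ⟨h + g, hh.add hg, ⟨C + D, fun t => add_le_add (hC t) (hD t)⟩,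
      funext fun ν => ?_⟩
    have := ν.2
    have hfin : ∀ {h : T → NNReal} {C : NNReal}, (∀ t, h t ≤ C) →
        ∫⁻ t, (h t : ENNReal) ∂ν.1 ≠ ⊤ := fun hC =>
      (IsFiniteMeasure.lintegral_lt_top_of_bounded_to_ennreal _
        ⟨_, fun t => ENNReal.coe_le_coe.2 (hC t)⟩).ne
    simp only [Pi.add_apply, ENNReal.coe_add, Pi.mul_apply, ← Real.exp_add,
      lintegral_add_left hh.coe_nnreal_ennreal, ENNReal.toReal_add (hfin hC) (hfin hD), neg_add]

theorem measurable_of_mem_laplaceFunctionals {F : {ν : Measure T // IsFiniteMeasure ν} → ℝ}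
    (hF : F ∈ laplaceFunctionals T) : Measurable F := by
  obtain ⟨h, hh, -, rfl⟩ := hF
  exact Real.measurable_exp.comp ((Measure.measurable_lintegral hh.coe_nnreal_ennreal).comp
    measurable_subtype_coe).ennreal_toReal.neg

abbrev laplaceAlgebra (T : Type*) [MeasurableSpace T] :
    Subalgebra ℝ ({ν : Measure T // IsFiniteMeasure ν} → ℝ) :=
  Algebra.adjoin ℝ (laplaceFunctionals T)

theorem measurableSpace_le_iSup_comap_laplaceAlgebra :
    (inferInstance : MeasurableSpace {ν : Measure T // IsFiniteMeasure ν}) ≤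
      ⨆ F ∈ laplaceAlgebra T, MeasurableSpace.comap F inferInstance := by
  refine measurable_iff_comap_le.1 <| @Measure.measurable_of_measurable_coe _ _ _
    (⨆ F ∈ laplaceAlgebra T, MeasurableSpace.comap F inferInstance) _ fun B hB => ?_
  set F : {ν : Measure T // IsFiniteMeasure ν} → ℝ := fun ν => Real.exp (-(ν.1 B).toReal)
  have hF : F ∈ laplaceFunctionals T := by
    refine ⟨B.indicator 1, measurable_one.indicator hB, ⟨1, fun t => ?_⟩, funext fun ν => ?_⟩
    · by_cases ht : t ∈ B <;> simp [ht]
    · simp [F, ENNReal.coe_indicator, Pi.one_def, lintegral_indicator hB]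
  have hB : (fun ν : {ν : Measure T // IsFiniteMeasure ν} => ν.1 B) =
      fun ν => ENNReal.ofReal (-Real.log (F ν)) := funext fun ν => by
    have := ν.2
    simp [F]
  rw [hB]
  exact (Real.measurable_log.comp
    (measurable_of_mem_iSup_comap (Algebra.subset_adjoin hF))).neg.ennreal_ofReal

theorem laplaceAlgebra_le_measurableIntegralSubmodule {S : Type*} [MeasurableSpace S]
    {μ : S → Measure {ν : Measure T // IsFiniteMeasure ν}} [∀ s, IsFiniteMeasure (μ s)]
    (H : ∀ h : T → NNReal, Measurable h → (∃ C, ∀ t, h t ≤ C) → Measurable fun s =>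
      ∫⁻ ν, ENNReal.ofReal (Real.exp (-(∫⁻ t, (h t : ENNReal) ∂ν.1).toReal)) ∂μ s) :
    Subalgebra.toSubmodule (laplaceAlgebra T) ≤ measurableIntegralSubmodule μ := by
  rw [laplaceAlgebra, Algebra.adjoin_eq_span, Submonoid.closure_eq, Submodule.span_le]
  rintro _ hF
  obtain ⟨h, hh, hC, rfl⟩ := id hF
  refine ⟨measurable_of_mem_laplaceFunctionals hF, ⟨1, fun ν => ?_⟩, ?_⟩
  · rw [abs_of_pos (Real.exp_pos _), Real.exp_le_one_iff, neg_nonpos]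
    exact ENNReal.toReal_nonneg
  · simp only [integral_eq_lintegral_of_nonneg_ae (ae_of_all _ fun _ => (Real.exp_pos _).le)
      (measurable_of_mem_laplaceFunctionals hF).aestronglyMeasurable]
    exact (H h hh hC).ennreal_toReal

end LaplaceFunctionals

/-- Lemma 1 of the paper: let `S`, `T` be measurable spaces. A map
`s ↦ μ_s` from `S` to `M(M(T))` (the finite measures on the space `M(T)` of finite
measures on `T`, each space of measures carrying the σ-algebra generated by the
evaluation maps) is measurable — i.e. is a kernel from `S` to `M(T)` — if and only
if for every bounded measurable `h : T → [0,∞)` the map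
`s ↦ ∫_{M(T)} exp (−ν(h)) dμ_s(ν)` is measurable from `S` to `[0,∞]`. -/
theorem kernel_iff_exp_integrals_measurable (S T : Type*) [MeasurableSpace S]
    [MeasurableSpace T]
    (μ : S → {m : Measure {ν : Measure T // IsFiniteMeasure ν} // IsFiniteMeasure m}) :
    Measurable μ ↔
      ∀ h : T → NNReal, Measurable h → (∃ C, ∀ t, h t ≤ C) →
        Measurable (fun s =>
          ∫⁻ ν : {ν : Measure T // IsFiniteMeasure ν},
            ENNReal.ofReal (Real.exp (-(∫⁻ t, (h t : ENNReal) ∂ν.1).toReal)) ∂(μ s).1) := by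
  refine ⟨fun hμ h hh hC => ?_, fun H => ?_⟩
  · exact (Measure.measurable_lintegral
      (measurable_of_mem_laplaceFunctionals ⟨h, hh, hC, rfl⟩).ennreal_ofReal).comp
      (measurable_subtype_coe.comp hμ)
  · have : ∀ s, IsFiniteMeasure (μ s).1 := fun s => (μ s).2
    exact (Measurable.measure_of_subalgebra (laplaceAlgebra_le_measurableIntegralSubmodule H)
      measurableSpace_le_iSup_comap_laplaceAlgebra).subtype_mk
end

section
/- Let T be a measurable space. The σ-algebra on M(T) (the set of finite measures on T) generated by the family of functions ν ↦ exp(−ν(h)), where h ranges over all bounded measurable functions h : T → [0,∞), equals the σ-algebra generated by the evaluation maps ν ↦ ν(B) over measurable sets B ⊆ T. -/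
open MeasureTheory

/-- for a measurable space `T`, the σ-algebra on the space `M(T)` of
finite measures on `T` generated by the functions `ν ↦ exp (−ν(h))`, for `h` ranging
over the bounded measurable functions `h : T → [0,∞)`, coincides with the σ-algebra
generated by the evaluation maps `ν ↦ ν B` over measurable sets `B ⊆ T`. -/
theorem exp_sigmaAlgebra_eq_eval_sigmaAlgebra (T : Type*) [MeasurableSpace T] :
    (⨆ (h : T → NNReal) (_ : Measurable h) (_ : ∃ C, ∀ t, h t ≤ C),
        MeasurableSpace.comap
          (fun ν : {ν : Measure T // IsFiniteMeasure ν} =>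
            Real.exp (-(∫⁻ t, (h t : ENNReal) ∂ν.1).toReal)) inferInstance) =
      (⨆ (B : Set T) (_ : MeasurableSet B),
        MeasurableSpace.comap
          (fun ν : {ν : Measure T // IsFiniteMeasure ν} => ν.1 B) inferInstance) := by
  set M := {ν : Measure T // IsFiniteMeasure ν}
  set L : MeasurableSpace M :=
    ⨆ (h : T → NNReal) (_ : Measurable h) (_ : ∃ C, ∀ t, h t ≤ C),
      MeasurableSpace.comap
        (fun ν : M => Real.exp (-(∫⁻ t, (h t : ENNReal) ∂ν.1).toReal)) inferInstance
  set R : MeasurableSpace M :=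
    ⨆ (B : Set T) (_ : MeasurableSet B),
      MeasurableSpace.comap (fun ν : M => ν.1 B) inferInstance
  have key : ∀ (h : T → NNReal), Measurable h → (∃ C, ∀ t, h t ≤ C) →
      Measurable[L] (fun ν : M => ∫⁻ t, (h t : ENNReal) ∂ν.1) := by
    intro h hm hbd
    obtain ⟨C, hC⟩ := hbd
    have h1 : Measurable[L]
        (fun ν : M => Real.exp (-(∫⁻ t, (h t : ENNReal) ∂ν.1).toReal)) := by
      refine measurable_iff_comap_le.mpr ?_
      exact le_iSup_of_le h (le_iSup_of_le hm (le_iSup_of_le ⟨C, hC⟩ le_rfl))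
    have h2 : Measurable[L] (fun ν : M => (∫⁻ t, (h t : ENNReal) ∂ν.1).toReal) := by
      have heq : (fun ν : M => (∫⁻ t, (h t : ENNReal) ∂ν.1).toReal) =
          fun ν : M => -Real.log (Real.exp (-(∫⁻ t, (h t : ENNReal) ∂ν.1).toReal)) := by
        funext ν; rw [Real.log_exp]; ring
      rw [heq]
      exact (Real.measurable_log.comp h1).neg
    have hfin : ∀ ν : M, ∫⁻ t, (h t : ENNReal) ∂ν.1 ≠ ⊤ := by
      intro ν
      haveI := ν.2
      refine ne_top_of_le_ne_top ?_ (lintegral_mono fun t => ENNReal.coe_le_coe.mpr (hC t))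
      rw [lintegral_const]
      exact (ENNReal.mul_lt_top ENNReal.coe_lt_top (measure_lt_top _ _)).ne
    have heq : (fun ν : M => ∫⁻ t, (h t : ENNReal) ∂ν.1) =
        fun ν : M => ENNReal.ofReal ((∫⁻ t, (h t : ENNReal) ∂ν.1).toReal) := by
      funext ν; rw [ENNReal.ofReal_toReal (hfin ν)]
    rw [heq]
    exact ENNReal.measurable_ofReal.comp h2
  apply le_antisymm
  · refine iSup_le fun h => iSup_le fun hm => iSup_le fun _ => ?_
    refine measurable_iff_comap_le.mp ?_
    have hval : Measurable[R] (fun ν : M => ν.1) := by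
      refine Measure.measurable_of_measurable_coe _ fun B hB => ?_
      refine measurable_iff_comap_le.mpr ?_
      exact le_iSup_of_le B (le_iSup_of_le hB le_rfl)
    have hint : Measurable[R] (fun ν : M => ∫⁻ t, (h t : ENNReal) ∂ν.1) :=
      (Measure.measurable_lintegral (measurable_coe_nnreal_ennreal.comp hm)).comp hval
    exact Real.measurable_exp.comp hint.ennreal_toReal.neg
  · refine iSup_le fun B => iSup_le fun hB => ?_
    refine measurable_iff_comap_le.mp ?_
    have hmeas : Measurable (B.indicator (fun _ => (1 : NNReal))) :=
      measurable_const.indicator hB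
    have hbd : ∃ C, ∀ t, B.indicator (fun _ => (1 : NNReal)) t ≤ C := by
      refine ⟨1, fun t => ?_⟩
      classical
      by_cases ht : t ∈ B <;> simp [Set.indicator, ht]
    have := key _ hmeas hbd
    simp only [ENNReal.coe_indicator, ENNReal.coe_one, lintegral_indicator hB,
      lintegral_const, Measure.restrict_apply MeasurableSet.univ, Set.univ_inter,
      one_mul] at this
    exact this
end

section
/- Let S be a measurable space and let R : S → M(S), s ↦ R_s, be a kernel (a measurable map into the finite measures on S). For μ ∈ M*(S) (nonzero finite measures on S), define R_μ ∈ P(M*(S)) as the pushforward of the normalized measure μ/μ(S) under the map s ↦ μ + R_s. Then μ ↦ R_μ is measurable from M*(S) to P(M*(S)); that is, R_• is a probability kernel from M*(S) to itself. -/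
open MeasureTheory

/-- `M*(S)`: the nonzero finite measures on `S`, with the σ-algebra induced by the
evaluation maps. -/
abbrev MStar (S : Type*) [MeasurableSpace S] := {μ : Measure S // IsFiniteMeasure μ ∧ μ ≠ 0}

/-- One step of the measure-valued Pólya urn with deterministic replacement kernel
`R : S → M(S)`: `urnStep R μ` is the pushforward of the normalized measure
`μ / μ(S)` under the map `s ↦ μ + R_s`. -/
noncomputable def urnStep {S : Type*} [MeasurableSpace S]
    (R : S → {ν : Measure S // IsFiniteMeasure ν}) (μ : MStar S) : Measure (MStar S) :=
  Measure.map
    (fun s => (⟨μ.1 + (R s).1,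
      ⟨by have := μ.2.1; have := (R s).2; infer_instance,
       by
        intro h
        have hle : μ.1 ≤ μ.1 + (R s).1 := Measure.le_add_right le_rfl
        rw [h] at hle
        exact μ.2.2 (le_antisymm hle (Measure.zero_le _))⟩⟩ : MStar S))
    ((μ.1 Set.univ)⁻¹ • μ.1)

/-- Lemma LD of the paper: for a measurable space `S` and a kernel
`R : S → M(S)`, the map `μ ↦ R_μ` sending `μ ∈ M*(S)` to the pushforward of
`μ / μ(S)` under `s ↦ μ + R_s` takes values in the probability measures on `M*(S)`
and is measurable, i.e. it is a probability kernel from `M*(S)` to itself. -/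
theorem urnStep_isProbabilityKernel (S : Type*) [MeasurableSpace S]
    (R : S → {ν : Measure S // IsFiniteMeasure ν}) (hR : Measurable R) :
    (∀ μ : MStar S, IsProbabilityMeasure (urnStep R μ)) ∧ Measurable (urnStep R) := by
  -- the joint map g : MStar S × S → MStar S
  have hgval : Measurable (fun p : MStar S × S => p.1.1 + (R p.2).1) := by
    apply Measure.measurable_of_measurable_coe
    intro B hB
    simp only [Measure.coe_add, Pi.add_apply]
    exact ((Measure.measurable_coe hB).comp
        (measurable_subtype_coe.comp measurable_fst)).add
      ((Measure.measurable_coe hB).comp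
        (measurable_subtype_coe.comp (hR.comp measurable_snd)))
  have hgprop : ∀ p : MStar S × S, IsFiniteMeasure (p.1.1 + (R p.2).1) ∧
      p.1.1 + (R p.2).1 ≠ 0 := by
    intro ⟨μ, s⟩
    refine ⟨by have := μ.2.1; have := (R s).2; infer_instance, ?_⟩
    intro h
    have hle : μ.1 ≤ μ.1 + (R s).1 := Measure.le_add_right le_rfl
    rw [h] at hle
    exact μ.2.2 (le_antisymm hle (Measure.zero_le _))
  set g : MStar S × S → MStar S := fun p => ⟨p.1.1 + (R p.2).1, hgprop p⟩ with hgdef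
  have hg : Measurable g := hgval.subtype_mk
  -- per-μ measurability of the section map
  have hf : ∀ μ : MStar S, Measurable (fun s => g (μ, s)) :=
    fun μ => hg.comp measurable_prodMk_left
  have hfe : ∀ μ : MStar S,
      (fun s => (⟨μ.1 + (R s).1,
        ⟨by have := μ.2.1; have := (R s).2; infer_instance,
         by
          intro h
          have hle : μ.1 ≤ μ.1 + (R s).1 := Measure.le_add_right le_rfl
          rw [h] at hle
          exact μ.2.2 (le_antisymm hle (Measure.zero_le _))⟩⟩ : MStar S))
      = fun s => g (μ, s) := by
    intro μ
    funext s
    rfl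
  -- facts about total mass
  have hμ0 : ∀ μ : MStar S, μ.1 Set.univ ≠ 0 := by
    intro μ h
    exact μ.2.2 (Measure.measure_univ_eq_zero.mp h)
  have hμtop : ∀ μ : MStar S, μ.1 Set.univ ≠ ⊤ := by
    intro μ
    have := μ.2.1
    exact measure_ne_top _ _
  have hone : ∀ μ : MStar S, ((μ.1 Set.univ)⁻¹ • μ.1) Set.univ = 1 := by
    intro μ
    simp [Measure.smul_apply, smul_eq_mul, ENNReal.inv_mul_cancel (hμ0 μ) (hμtop μ)]
  constructor
  · intro μ
    constructor
    rw [urnStep, hfe μ, Measure.map_apply (hf μ) MeasurableSet.univ,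
      Set.preimage_univ, hone μ]
  · -- the normalization kernel
    have hκmeas : Measurable (fun μ : MStar S => (μ.1 Set.univ)⁻¹ • μ.1) := by
      apply Measure.measurable_of_measurable_coe
      intro B hB
      simp only [Measure.smul_apply, smul_eq_mul]
      exact (((Measure.measurable_coe MeasurableSet.univ).comp
        measurable_subtype_coe).inv).mul
        ((Measure.measurable_coe hB).comp measurable_subtype_coe)
    set κ : ProbabilityTheory.Kernel (MStar S) S :=
      ⟨fun μ => (μ.1 Set.univ)⁻¹ • μ.1, hκmeas⟩ with hκdef
    have : ProbabilityTheory.IsMarkovKernel κ := ⟨fun μ => ⟨hone μ⟩⟩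
    apply Measure.measurable_of_measurable_coe
    intro A hA
    have key := ProbabilityTheory.Kernel.measurable_kernel_prodMk_left
      (κ := κ) (hg hA)
    have heq : (fun μ : MStar S => κ μ (Prod.mk μ ⁻¹' (g ⁻¹' A)))
        = fun μ : MStar S => urnStep R μ A := by
      funext μ
      rw [urnStep, hfe μ, Measure.map_apply (hf μ) hA]
      rfl
    rw [← heq]
    exact key
end

section
/- Let S = {0,1}^ℝ be equipped with the product σ-algebra generated by the coordinate projections (equivalently, the σ-algebra consisting of all sets of the form π_A^{-1}(B) for countable A ⊆ ℝ and Borel B ⊆ {0,1}^A). Then the map μ ↦ |μ|(S), from the space M±(S) of finite signed measures on S (with the σ-algebra generated by the evaluation maps μ ↦ μ(B)) to [0,∞), is not measurable; moreover, the set M(S) of nonnegative finite measures is not a measurable subset of M±(S). -/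
/-!
A measurable set of signed measures on `ι → β` is decided by the values on countably many
measurable sets `B n`, and each `B n` depends on countably many coordinates. For uncountable `ι`
pick a coordinate `r` outside all of these and two points `x`, `y` differing only at `r`: then
`δ_y - δ_x` vanishes on every `B n`, so it lies in any measurable set of signed measures exactly
when `0` does. Yet it takes the value `-1` on `{z | z r = x r}`, so it is neither nonnegative nor
of total variation `0`.
-/

open MeasureTheory

theorem MeasurableSpace.exists_countable_mem_iff_of_measurableSet_iSup_comap
    {α ι : Type*} {β : ι → Type*} [m : ∀ i, MeasurableSpace (β i)] (f : ∀ i, α → β i)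
    {s : Set α} (hs : MeasurableSet[⨆ i, (m i).comap (f i)] s) :
    ∃ I : Set ι, I.Countable ∧ ∀ x y, (∀ i ∈ I, f i x = f i y) → (x ∈ s ↔ y ∈ s) := by
  rw [measurableSet_iSup] at hs
  induction hs with
  | basic u hu =>
    obtain ⟨i, t, -, rfl⟩ := hu
    exact ⟨{i}, Set.countable_singleton i, fun x y h => by simp [h i rfl]⟩
  | empty => exact ⟨∅, Set.countable_empty, fun _ _ _ => Iff.rfl⟩
  | compl u _ ih =>
    obtain ⟨I, hI, hu⟩ := ih
    exact ⟨I, hI, fun x y h => not_congr (hu x y h)⟩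
  | iUnion u _ ih =>
    choose I hI hu using ih
    refine ⟨⋃ n, I n, Set.countable_iUnion hI, fun x y h => ?_⟩
    simp only [Set.mem_iUnion]
    exact exists_congr fun n => hu n x y fun i hi => h i (Set.mem_iUnion_of_mem n hi)

theorem MeasurableSet.exists_countable_dependsOn {ι : Type*} {β : ι → Type*}
    [∀ i, MeasurableSpace (β i)] {s : Set (∀ i, β i)} (hs : MeasurableSet s) :
    ∃ I : Set ι, I.Countable ∧ DependsOn (· ∈ s) I := by
  obtain ⟨I, hI, hs⟩ :=
    MeasurableSpace.exists_countable_mem_iff_of_measurableSet_iSup_comap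
      (fun i (x : ∀ i, β i) => x i) hs
  exact ⟨I, hI, fun x y h => propext (hs x y h)⟩

theorem MeasureTheory.Measure.toSignedMeasure_dirac_sub_apply {S : Type*} [MeasurableSpace S]
    (x y : S) {B : Set S} (hB : MeasurableSet B) :
    ((dirac y).toSignedMeasure - (dirac x).toSignedMeasure) B
      = B.indicator (1 : S → ℝ) y - B.indicator 1 x := by
  rw [toSignedMeasure_sub_apply hB, measureReal_def, measureReal_def,
    dirac_apply' _ hB, dirac_apply' _ hB]
  by_cases hx : x ∈ B <;> by_cases hy : y ∈ B <;> simp [hx, hy]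

namespace MeasureTheory.SignedMeasure

variable {S : Type*} [MeasurableSpace S]

theorem exists_countable_mem_iff_of_measurableSet {T : Set (SignedMeasure S)}
    (hT : MeasurableSet T) :
    ∃ 𝓑 : Set (Set S), 𝓑.Countable ∧ (∀ B ∈ 𝓑, MeasurableSet B) ∧
      ∀ μ ν : SignedMeasure S, (∀ B ∈ 𝓑, μ B = ν B) → (μ ∈ T ↔ ν ∈ T) := by
  rw [signedMeasureMeasurableSpace, iSup_subtype'] at hT
  obtain ⟨I, hI, hT⟩ := MeasurableSpace.exists_countable_mem_iff_of_measurableSet_iSup_comap _ hT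
  refine ⟨Subtype.val '' I, hI.image _, ?_, fun μ ν h => hT μ ν fun B hB => h B ⟨B, hB, rfl⟩⟩
  rintro _ ⟨B, -, rfl⟩
  exact B.2

theorem exists_apply_eq_neg_one_and_mem_iff_zero_mem {ι β : Type*} [Uncountable ι]
    [MeasurableSpace β] [MeasurableSingletonClass β] [Nontrivial β]
    {T : Set (SignedMeasure (ι → β))} (hT : MeasurableSet T) :
    ∃ μ : SignedMeasure (ι → β), ∃ B, MeasurableSet B ∧ μ B = -1 ∧ (μ ∈ T ↔ 0 ∈ T) := by
  classical
  obtain ⟨𝓑, h𝓑, h𝓑m, hT⟩ := exists_countable_mem_iff_of_measurableSet hT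
  choose! J hJ hdep using fun B hB => (h𝓑m B hB).exists_countable_dependsOn
  obtain ⟨r, hr⟩ : ∃ r, r ∉ ⋃ B ∈ 𝓑, J B := (Set.ne_univ_iff_exists_notMem _).mp
    fun h => Set.not_countable_univ (h ▸ h𝓑.biUnion hJ)
  let x : ι → β := fun _ => Classical.arbitrary β
  obtain ⟨b, hb⟩ := exists_ne (x r)
  let y := Function.update x r b
  have hxy : ∀ B ∈ 𝓑, (x ∈ B ↔ y ∈ B) := fun B hB => Iff.of_eq <| hdep B hB fun i hi =>
    (Function.update_of_ne (by rintro rfl; exact hr (Set.mem_biUnion hB hi)) b x).symm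
  have hr_meas : MeasurableSet {z : ι → β | z r = x r} :=
    measurable_pi_apply r (measurableSet_singleton _)
  refine ⟨(Measure.dirac y).toSignedMeasure - (Measure.dirac x).toSignedMeasure,
    _, hr_meas, ?_, hT _ _ fun B hB => ?_⟩
  · simp [Measure.toSignedMeasure_dirac_sub_apply x y hr_meas, y, hb]
  · rw [Measure.toSignedMeasure_dirac_sub_apply x y (h𝓑m B hB), Set.indicator_apply,
      Set.indicator_apply, ← hxy B hB]
    simp

end MeasureTheory.SignedMeasure

/-- on the space `S = {0,1}^ℝ` with the product σ-algebra generated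
by the coordinate projections, the map `μ ↦ |μ|(S)` from the space `M±(S)` of
finite signed measures (with the σ-algebra generated by the evaluation maps) to
`[0,∞)` is not measurable; moreover the set `M(S)` of nonnegative finite measures
is not a measurable subset of `M±(S)`. -/
theorem totalVariation_not_measurable_counterexample :
    ¬ Measurable (fun μ : SignedMeasure (ℝ → Bool) =>
        (μ.totalVariation Set.univ).toReal) ∧
    ¬ MeasurableSet {μ : SignedMeasure (ℝ → Bool) | 0 ≤ μ} := by
  constructor
  · intro hmeas
    obtain ⟨μ, B, -, hμB, hμ⟩ :=
      SignedMeasure.exists_apply_eq_neg_one_and_mem_iff_zero_mem (hmeas (measurableSet_singleton 0))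
    have hμ_zero : μ.totalVariation.real Set.univ = 0 :=
      hμ.mpr (by simp [SignedMeasure.totalVariation_zero])
    have : (1 : ℝ) ≤ 0 := calc
      (1 : ℝ) = ‖μ B‖ := by simp [hμB]
      _ ≤ μ.totalVariation.real B := μ.norm_le_totalVariation B
      _ ≤ μ.totalVariation.real Set.univ := measureReal_mono (Set.subset_univ B)
      _ = 0 := hμ_zero
    norm_num at this
  · intro hmeas
    obtain ⟨μ, B, hB, hμB, hμ⟩ :=
      SignedMeasure.exists_apply_eq_neg_one_and_mem_iff_zero_mem hmeas
    have hμ_nonneg : (0 : SignedMeasure (ℝ → Bool)) B ≤ μ B :=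
      VectorMeasure.le_iff.mp (hμ.mpr (Set.mem_ofPred.mpr le_rfl)) B hB
    rw [hμB, zero_apply] at hμ_nonneg
    norm_num at hμ_nonneg
end

section
/- Let S be a Borel subset of [0,1] (with its Borel σ-algebra), let μ be a finite signed measure on S, and let B ⊆ S be a Borel set. Then |μ|(B) = lim_{n→∞} Σ_{i=0}^{n} |μ(B ∩ [i/n, (i+1)/n))|, where |μ| denotes the total variation measure of μ and the intervals are intersected with S. -/
open MeasureTheory


/-- The grid interval `[i/n, (i+1)/n)`. -/
def gridI (n i : ℕ) : Set ℝ := Set.Ico ((i : ℝ) / (n : ℝ)) (((i : ℝ) + 1) / (n : ℝ))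

lemma gridI_meas (n i : ℕ) : MeasurableSet (gridI n i) := measurableSet_Ico

lemma grid_pd (n : ℕ) :
    Set.PairwiseDisjoint (↑(Finset.range (n + 1))) (fun i : ℕ => gridI n i) := by
  have h : ∀ a b : ℕ, a < b → Disjoint (gridI n a) (gridI n b) := by
    intro a b hab
    rw [gridI, gridI, Set.Ico_disjoint_Ico]
    rcases Nat.eq_zero_or_pos n with h0 | h0
    · simp [h0]
    · have hn : (0:ℝ) < n := by exact_mod_cast h0
      have hab' : ((a:ℝ) + 1) ≤ (b:ℝ) := by exact_mod_cast hab
      calc min (((a:ℝ)+1)/n) (((b:ℝ)+1)/n) ≤ ((a:ℝ)+1)/n := min_le_left _ _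
        _ ≤ (b:ℝ)/n := by gcongr
        _ ≤ max ((a:ℝ)/n) ((b:ℝ)/n) := le_max_right _ _
  intro i _ j _ hij
  rcases hij.lt_or_gt with hlt | hlt
  · exact h _ _ hlt
  · exact (h _ _ hlt).symm

lemma grid_cover {n : ℕ} (hn : 1 ≤ n) {x : ℝ} (hx : x ∈ Set.Icc (0:ℝ) 1) :
    ∃ i ∈ Finset.range (n + 1), x ∈ gridI n i := by
  have hn' : (0:ℝ) < n := by exact_mod_cast hn
  have hx0 : 0 ≤ x * n := mul_nonneg hx.1 hn'.le
  refine ⟨⌊x * n⌋₊, ?_, ?_, ?_⟩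
  · rw [Finset.mem_range, Nat.lt_succ_iff]
    have h1 : x * n ≤ (n : ℝ) := by nlinarith [hx.2]
    calc ⌊x * n⌋₊ ≤ ⌊(n : ℝ)⌋₊ := Nat.floor_le_floor h1
      _ = n := Nat.floor_natCast n
  · rw [div_le_iff₀ hn']
    exact Nat.floor_le hx0
  · rw [lt_div_iff₀ hn']
    exact Nat.lt_floor_add_one (x * n)

/-- Key approximation lemma: for a finite measure on `ℝ` and a measurable set `A`,
the sum of the minima of the measures of grid pieces inside and outside `A` tends to 0. -/
lemma aux_min (ν : Measure ℝ) [IsFiniteMeasure ν] (A : Set ℝ) (hA : MeasurableSet A) :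
    Filter.Tendsto (fun n : ℕ => ∑ i ∈ Finset.range (n + 1),
      min (ν (gridI n i ∩ A)).toReal (ν (gridI n i ∩ Aᶜ)).toReal)
      Filter.atTop (nhds 0) := by
  rw [Metric.tendsto_atTop]
  intro ε hε
  have hε2 : (0:ℝ) < ε / 2 := by linarith
  have hne : ENNReal.ofReal (ε / 2) ≠ 0 := (ENNReal.ofReal_pos.mpr hε2).ne'
  obtain ⟨K, hKA, hKc, hK⟩ := hA.exists_isCompact_lt_add (measure_ne_top ν A)
    (ε := ENNReal.ofReal (ε / 2)) hne
  obtain ⟨U, hAU, hUo, hU⟩ := A.exists_isOpen_lt_add (measure_ne_top ν A)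
    (ε := ENNReal.ofReal (ε / 2)) hne
  have hKU : K ⊆ U := hKA.trans hAU
  obtain ⟨δ, hδ, hthick⟩ := hKc.exists_thickening_subset_open hUo hKU
  obtain ⟨N, hN⟩ := exists_nat_gt (1 / δ)
  set W : Set ℝ := U \ K with hW
  have hWmeas : MeasurableSet W := hUo.measurableSet.diff hKc.measurableSet
  have hWsmall : ν W < ENNReal.ofReal ε := by
    have h1 : ν (U \ A) < ENNReal.ofReal (ε / 2) :=
      measure_diff_lt_of_lt_add hA.nullMeasurableSet hAU (measure_ne_top ν A) hU
    have h2 : ν (A \ K) < ENNReal.ofReal (ε / 2) :=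
      measure_diff_lt_of_lt_add hKc.measurableSet.nullMeasurableSet hKA (measure_ne_top ν K) hK
    have hsub : W ⊆ (U \ A) ∪ (A \ K) := by
      intro x hx
      by_cases hxA : x ∈ A
      · exact Or.inr ⟨hxA, hx.2⟩
      · exact Or.inl ⟨hx.1, hxA⟩
    calc ν W ≤ ν ((U \ A) ∪ (A \ K)) := measure_mono hsub
      _ ≤ ν (U \ A) + ν (A \ K) := measure_union_le _ _
      _ < ENNReal.ofReal (ε / 2) + ENNReal.ofReal (ε / 2) := ENNReal.add_lt_add h1 h2
      _ = ENNReal.ofReal ε := by rw [← ENNReal.ofReal_add hε2.le hε2.le]; norm_num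
  refine ⟨max N 1, fun n hn => ?_⟩
  have hn1 : 1 ≤ n := le_trans (le_max_right N 1) hn
  have hnN : N ≤ n := le_trans (le_max_left N 1) hn
  have hnpos : (0:ℝ) < n := by exact_mod_cast hn1
  have hδn : 1 / (n : ℝ) < δ := by
    have hNpos : (0:ℝ) < N := lt_of_le_of_lt (by positivity) hN
    have : (1:ℝ) / N < δ := by
      rw [div_lt_iff₀ hNpos]
      rw [div_lt_iff₀ hδ] at hN
      nlinarith
    calc (1:ℝ) / n ≤ 1 / N := by
          apply div_le_div_of_nonneg_left (by norm_num) hNpos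
          exact_mod_cast hnN
      _ < δ := this
  -- each piece is bounded by ν (gridI n i ∩ W)
  have hbound : ∀ i ∈ Finset.range (n + 1),
      min (ν (gridI n i ∩ A)).toReal (ν (gridI n i ∩ Aᶜ)).toReal
        ≤ (ν (gridI n i ∩ W)).toReal := by
    intro i _
    by_cases hJK : (gridI n i ∩ K).Nonempty
    · -- gridI n i ⊆ U, so gridI ∩ Aᶜ ⊆ gridI ∩ W
      obtain ⟨x, hxJ, hxK⟩ := hJK
      have hJU : gridI n i ⊆ U := by
        intro y hy
        apply hthick
        rw [Metric.mem_thickening_iff]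
        refine ⟨x, hxK, ?_⟩
        have h1 : |y - x| < 1 / n := by
          simp only [gridI, Set.mem_Ico] at hy hxJ
          have hd : ((i:ℝ)+1)/n - (i:ℝ)/n = 1 / n := by
            rw [div_sub_div_same]; ring_nf
          rw [abs_sub_lt_iff]
          constructor
          · linarith [hy.2, hxJ.1]
          · linarith [hxJ.2, hy.1]
        calc dist y x = |y - x| := Real.dist_eq y x
          _ < 1 / n := h1
          _ < δ := hδn
      have hsub : gridI n i ∩ Aᶜ ⊆ gridI n i ∩ W := by
        intro y hy
        exact ⟨hy.1, hJU hy.1, fun hyK => hy.2 (hKA hyK)⟩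
      calc min (ν (gridI n i ∩ A)).toReal (ν (gridI n i ∩ Aᶜ)).toReal
          ≤ (ν (gridI n i ∩ Aᶜ)).toReal := min_le_right _ _
        _ ≤ (ν (gridI n i ∩ W)).toReal :=
            ENNReal.toReal_mono (measure_ne_top ν _) (measure_mono hsub)
    · -- gridI n i ∩ K = ∅, so gridI ∩ A ⊆ gridI ∩ W
      rw [Set.not_nonempty_iff_eq_empty] at hJK
      have hsub : gridI n i ∩ A ⊆ gridI n i ∩ W := by
        intro y hy
        refine ⟨hy.1, hAU hy.2, fun hyK => ?_⟩
        exact absurd (Set.mem_inter hy.1 hyK) (by rw [hJK]; exact Set.notMem_empty y)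
      calc min (ν (gridI n i ∩ A)).toReal (ν (gridI n i ∩ Aᶜ)).toReal
          ≤ (ν (gridI n i ∩ A)).toReal := min_le_left _ _
        _ ≤ (ν (gridI n i ∩ W)).toReal :=
            ENNReal.toReal_mono (measure_ne_top ν _) (measure_mono hsub)
  have hsum : ∑ i ∈ Finset.range (n + 1), (ν (gridI n i ∩ W)).toReal
      ≤ (ν W).toReal := by
    rw [← ENNReal.toReal_sum (fun i _ => measure_ne_top ν _)]
    apply ENNReal.toReal_mono (measure_ne_top ν _)
    rw [← measure_biUnion_finset
      ((grid_pd n).mono (fun i => Set.inter_subset_left))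
      (fun i _ => (gridI_meas n i).inter hWmeas)]
    exact measure_mono (Set.iUnion₂_subset fun i _ => Set.inter_subset_right)
  have hnonneg : (0:ℝ) ≤ ∑ i ∈ Finset.range (n + 1),
      min (ν (gridI n i ∩ A)).toReal (ν (gridI n i ∩ Aᶜ)).toReal :=
    Finset.sum_nonneg fun i _ => le_min ENNReal.toReal_nonneg ENNReal.toReal_nonneg
  rw [Real.dist_eq, sub_zero, abs_of_nonneg hnonneg]
  calc ∑ i ∈ Finset.range (n + 1),
        min (ν (gridI n i ∩ A)).toReal (ν (gridI n i ∩ Aᶜ)).toReal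
      ≤ ∑ i ∈ Finset.range (n + 1), (ν (gridI n i ∩ W)).toReal :=
        Finset.sum_le_sum hbound
    _ ≤ (ν W).toReal := hsum
    _ < ε := ENNReal.toReal_lt_of_lt_ofReal hWsmall

/-- let `S` be a Borel subset of `[0,1]`, `μ` a finite signed
measure on `S`, and `B ⊆ S` a Borel set. Then
`|μ|(B) = lim_{n→∞} ∑_{i=0}^{n} |μ (B ∩ [i/n, (i+1)/n))|`, where `|μ|` is the
total variation measure of `μ` and the intervals are intersected with `S`. -/
theorem totalVariation_eq_lim_sum (S : Set ℝ) (hS : MeasurableSet S)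
    (hsub : S ⊆ Set.Icc 0 1) (μ : SignedMeasure ↥S) (B : Set ↥S)
    (hB : MeasurableSet B) :
    Filter.Tendsto
      (fun n : ℕ => ∑ i ∈ Finset.range (n + 1),
        |μ (B ∩ (Subtype.val ⁻¹' Set.Ico ((i : ℝ) / (n : ℝ)) (((i : ℝ) + 1) / (n : ℝ))))|)
      Filter.atTop (nhds ((μ.totalVariation B).toReal)) := by
  set p : Measure ↥S := μ.toJordanDecomposition.posPart with hp
  set q : Measure ↥S := μ.toJordanDecomposition.negPart with hq
  haveI : IsFiniteMeasure p := μ.toJordanDecomposition.posPart_finite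
  haveI : IsFiniteMeasure q := μ.toJordanDecomposition.negPart_finite
  obtain ⟨u, hu, hpu, hqu⟩ := μ.toJordanDecomposition.mutuallySingular
  set A : Set ↥S := uᶜ with hAdef
  have hAm : MeasurableSet A := hu.compl
  -- grid preimages on the subtype
  set I : ℕ → ℕ → Set ↥S := fun n i => (Subtype.val ⁻¹' gridI n i) with hI
  have hImeas : ∀ n i, MeasurableSet (I n i) :=
    fun n i => (gridI_meas n i).preimage measurable_subtype_coe
  -- signed measure value via Jordan decomposition
  have key : ∀ C : Set ↥S, MeasurableSet C → μ C = (p C).toReal - (q C).toReal := by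
    intro C hC
    conv_lhs => rw [← μ.toSignedMeasure_toJordanDecomposition]
    exact Measure.toSignedMeasure_sub_apply hC
  -- total variation value
  have hTV : (μ.totalVariation B).toReal = (p B).toReal + (q B).toReal := by
    rw [SignedMeasure.totalVariation, Measure.add_apply,
      ENNReal.toReal_add (measure_ne_top p B) (measure_ne_top q B)]
  -- partition property: for n ≥ 1 the grid preimages cover univ
  have hcover : ∀ n : ℕ, 1 ≤ n → (⋃ i ∈ Finset.range (n + 1), I n i) = Set.univ := by
    intro n hn
    ext x
    simp only [Set.mem_iUnion, Set.mem_univ, iff_true, Set.mem_preimage, hI]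
    obtain ⟨i, hi, hxi⟩ := grid_cover hn (hsub x.2)
    exact ⟨i, hi, hxi⟩
  have hpd : ∀ n (C : Set ↥S),
      Set.PairwiseDisjoint (↑(Finset.range (n + 1))) (fun i : ℕ => C ∩ I n i) := by
    intro n C
    intro i hi j hj hij
    have := grid_pd n hi hj hij
    exact (this.preimage Subtype.val).mono Set.inter_subset_right Set.inter_subset_right
  -- additivity over the partition
  have hadd : ∀ (m : Measure ↥S) [IsFiniteMeasure m], ∀ n : ℕ, 1 ≤ n →
      ∑ i ∈ Finset.range (n + 1), (m (B ∩ I n i)).toReal = (m B).toReal := by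
    intro m _ n hn
    rw [← ENNReal.toReal_sum (fun i _ => measure_ne_top m _)]
    congr 1
    rw [← measure_biUnion_finset (hpd n B)
      (fun i _ => hB.inter (hImeas n i))]
    congr 1
    rw [← Set.inter_iUnion₂, hcover n hn, Set.inter_univ]
  -- the min-sums
  set g : ℕ → ℝ := fun n => ∑ i ∈ Finset.range (n + 1),
    min (p (B ∩ I n i)).toReal (q (B ∩ I n i)).toReal with hg
  -- pushforward measure on ℝ
  set ν : Measure ℝ := (p + q).map Subtype.val with hν
  haveI : IsFiniteMeasure ν := by
    rw [hν]; exact Measure.isFiniteMeasure_map _ _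
  set Abar : Set ℝ := Subtype.val '' A with hAbar
  have hAbarm : MeasurableSet Abar := MeasurableSet.subtype_image hS hAm
  have hνapp : ∀ T : Set ℝ, MeasurableSet T → ν T = (p + q) (Subtype.val ⁻¹' T) :=
    fun T hT => Measure.map_apply measurable_subtype_coe hT
  have hpreA : (Subtype.val ⁻¹' Abar : Set ↥S) = A :=
    Set.preimage_image_eq A Subtype.val_injective
  -- bound g by the aux_min sums
  have hgle : ∀ n : ℕ, g n ≤ ∑ i ∈ Finset.range (n + 1),
      min (ν (gridI n i ∩ Abar)).toReal (ν (gridI n i ∩ Abarᶜ)).toReal := by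
    intro n
    apply Finset.sum_le_sum
    intro i _
    have h1 : (p (B ∩ I n i)).toReal ≤ (ν (gridI n i ∩ Abar)).toReal := by
      rw [hνapp _ ((gridI_meas n i).inter hAbarm), Set.preimage_inter, hpreA]
      apply ENNReal.toReal_mono (measure_ne_top _ _)
      calc p (B ∩ I n i) ≤ p (I n i) := measure_mono Set.inter_subset_right
        _ ≤ p ((I n i ∩ A) ∪ (I n i ∩ Aᶜ)) := by
            rw [Set.inter_union_compl]
        _ ≤ p (I n i ∩ A) + p (I n i ∩ Aᶜ) := measure_union_le _ _
        _ = p (I n i ∩ A) := by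
            have : p (I n i ∩ Aᶜ) = 0 :=
              measure_mono_null (by rw [hAdef, compl_compl]; exact Set.inter_subset_right) hpu
            rw [this, add_zero]
        _ ≤ (p + q) (I n i ∩ A) := by
            rw [Measure.add_apply]; exact le_self_add
    have h2 : (q (B ∩ I n i)).toReal ≤ (ν (gridI n i ∩ Abarᶜ)).toReal := by
      rw [hνapp _ ((gridI_meas n i).inter hAbarm.compl), Set.preimage_inter,
        Set.preimage_compl, hpreA]
      apply ENNReal.toReal_mono (measure_ne_top _ _)
      calc q (B ∩ I n i) ≤ q (I n i) := measure_mono Set.inter_subset_right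
        _ ≤ q ((I n i ∩ A) ∪ (I n i ∩ Aᶜ)) := by
            rw [Set.inter_union_compl]
        _ ≤ q (I n i ∩ A) + q (I n i ∩ Aᶜ) := measure_union_le _ _
        _ = q (I n i ∩ Aᶜ) := by
            have : q (I n i ∩ A) = 0 :=
              measure_mono_null (by rw [hAdef]; exact Set.inter_subset_right) hqu
            rw [this, zero_add]
        _ ≤ (p + q) (I n i ∩ Aᶜ) := by
            rw [Measure.add_apply]; exact le_add_self
    exact le_min ((min_le_left _ _).trans h1) ((min_le_right _ _).trans h2)
  have hgnonneg : ∀ n, 0 ≤ g n :=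
    fun n => Finset.sum_nonneg fun i _ => le_min ENNReal.toReal_nonneg ENNReal.toReal_nonneg
  have hg0 : Filter.Tendsto g Filter.atTop (nhds 0) := by
    apply squeeze_zero hgnonneg hgle
    exact aux_min ν Abar hAbarm
  -- |a - b| = a + b - 2 min a b
  have habs : ∀ a b : ℝ, |a - b| = a + b - 2 * min a b := by
    intro a b
    rcases le_total a b with h | h
    · rw [min_eq_left h, abs_of_nonpos (by linarith)]; ring
    · rw [min_eq_right h, abs_of_nonneg (by linarith)]; ring
  -- eventual identity
  have heq : ∀ n : ℕ, 1 ≤ n →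
      ∑ i ∈ Finset.range (n + 1),
        |μ (B ∩ (Subtype.val ⁻¹' Set.Ico ((i : ℝ) / (n : ℝ)) (((i : ℝ) + 1) / (n : ℝ))))|
      = (μ.totalVariation B).toReal - 2 * g n := by
    intro n hn
    have : ∀ i ∈ Finset.range (n + 1),
        |μ (B ∩ (Subtype.val ⁻¹' Set.Ico ((i : ℝ) / (n : ℝ)) (((i : ℝ) + 1) / (n : ℝ))))|
        = (p (B ∩ I n i)).toReal + (q (B ∩ I n i)).toReal
          - 2 * min (p (B ∩ I n i)).toReal (q (B ∩ I n i)).toReal := by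
      intro i _
      rw [show (Subtype.val ⁻¹' Set.Ico ((i : ℝ) / (n : ℝ)) (((i : ℝ) + 1) / (n : ℝ))) = I n i
        from rfl, key _ (hB.inter (hImeas n i)), habs]
    rw [Finset.sum_congr rfl this]
    rw [Finset.sum_sub_distrib, Finset.sum_add_distrib, ← Finset.mul_sum,
      hadd p n hn, hadd q n hn, hTV, hg]
  -- conclude
  have htend : Filter.Tendsto (fun n => (μ.totalVariation B).toReal - 2 * g n)
      Filter.atTop (nhds ((μ.totalVariation B).toReal)) := by
    have h2 : Filter.Tendsto (fun n => 2 * g n) Filter.atTop (nhds 0) := by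
      simpa using hg0.const_mul (2:ℝ)
    have h3 := (tendsto_const_nhds : Filter.Tendsto
      (fun _ : ℕ => (μ.totalVariation B).toReal) Filter.atTop (nhds _)).sub h2
    simpa using h3
  apply htend.congr'
  filter_upwards [Filter.eventually_ge_atTop 1] with n hn
  exact (heq n hn).symm
end
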